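/- arXiv:2210.02664 — 8 statements merged into one kernel-verified Lean document; each statement's English description precedes it below -/
import Mathlib

section
/- Every ℝ-linear isometric complex structure J on ℍ (i.e., J² = -Id and ‖Jx‖ = ‖x‖ for all x) is given either by left multiplication by a unit imaginary quaternion or by right multiplication by a unit imaginary quaternion. -/
open scoped Quaternion
open Quaternion

local notation "⟪" x ", " y "⟫" => @inner ℝ _ _ x y

lemma quat_re_eq_inner (x : ℍ[ℝ]) : ⟪x, (1 : ℍ[ℝ])⟫ = x.re := by
  simp [Quaternion.inner_def]

lemma quat_sq_neg_one {u : ℍ[ℝ]} (hre : u.re = 0) (hn : ‖u‖ = 1) :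
    u * u = -1 := by
  have hstar : star u = -u := by
    ext <;> simp [hre]
  have h1 : u * star u = ((normSq u : ℝ) : ℍ[ℝ]) := self_mul_star u
  have hns : (normSq u : ℝ) = 1 := by
    have := normSq_eq_norm_mul_self u
    rw [hn] at this; simpa using this
  rw [hstar, hns] at h1
  have h2 : u * u = -(u * (-u)) := by noncomm_ring
  rw [h2, h1]
  norm_num

lemma quat_anticomm {u v : ℍ[ℝ]} (hu : u.re = 0) (hv : v.re = 0)
    (h : ⟪u, v⟫ = 0) : u * v = -(v * u) := by
  have h' : u.imI * v.imI + u.imJ * v.imJ + u.imK * v.imK = 0 := by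
    simpa [Quaternion.inner_def, Quaternion.re_mul, hu, hv] using h
  ext
  · simp [Quaternion.re_mul, hu, hv]; linarith
  · simp [hu, hv]; ring
  · simp [hu, hv]; ring
  · simp [hu, hv]; ring

set_option maxHeartbeats 1000000 in
theorem compatible_complex_structures (J : ℍ[ℝ] →ₗ[ℝ] ℍ[ℝ])
    (hJ2 : ∀ x, J (J x) = -x) (hJiso : ∀ x, ‖J x‖ = ‖x‖) :
    ∃ u : ℍ[ℝ], ‖u‖ = 1 ∧ u.re = 0 ∧
      ((∀ x, J x = u * x) ∨ (∀ x, J x = x * u)) := by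
  classical
  -- J preserves inner products
  have hpres : ∀ x y : ℍ[ℝ], ⟪J x, J y⟫ = ⟪x, y⟫ := by
    intro x y
    exact (LinearIsometry.mk J hJiso).inner_map_map x y
  -- J is skew-adjoint
  have hskew : ∀ x y : ℍ[ℝ], ⟪J x, y⟫ = -⟪x, J y⟫ := by
    intro x y
    have h := hpres x (J y)
    rw [hJ2] at h
    rw [← h, inner_neg_right]
    ring_nf
  set u : ℍ[ℝ] := J 1 with hu_def
  have hu : ‖u‖ = 1 := by rw [hu_def, hJiso]; simp
  have hure : u.re = 0 := by
    have h := hskew 1 1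
    rw [← hu_def] at h
    have hsym : ⟪u, (1:ℍ[ℝ])⟫ = ⟪(1:ℍ[ℝ]), u⟫ := real_inner_comm _ _
    rw [hsym] at h
    have : ⟪(1:ℍ[ℝ]), u⟫ = 0 := by linarith
    rw [← quat_re_eq_inner u, real_inner_comm]
    exact this
  -- find v orthogonal to 1 and u
  obtain ⟨v, hv1, hvu, hvn⟩ :
      ∃ v : ℍ[ℝ], ⟪(1:ℍ[ℝ]), v⟫ = 0 ∧ ⟪u, v⟫ = 0 ∧ ‖v‖ = 1 := by
    set S := (Submodule.span ℝ ({1, u} : Set ℍ[ℝ]))ᗮ with hS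
    have hSne : S ≠ ⊥ := by
      intro hbot
      have htop : Submodule.span ℝ ({1, u} : Set ℍ[ℝ]) = ⊤ :=
        Submodule.orthogonal_eq_bot_iff.mp hbot
      have h4 : Module.finrank ℝ ℍ[ℝ] = 4 := Quaternion.finrank_eq_four
      have hle : Module.finrank ℝ ℍ[ℝ] ≤ 2 := by
        have h := finrank_span_le_card (R := ℝ) (({1, u} : Finset ℍ[ℝ]) : Set ℍ[ℝ])
        have hsp : Submodule.span ℝ ((({1, u} : Finset ℍ[ℝ]) : Set ℍ[ℝ])) = ⊤ := by
          rw [← htop]; congr 1; simp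
        rw [hsp, finrank_top] at h
        refine h.trans ?_
        rw [Finset.toFinset_coe]
        exact (Finset.card_insert_le _ _).trans (by simp)
      omega
    obtain ⟨w, hwS, hw0⟩ := Submodule.exists_mem_ne_zero_of_ne_bot hSne
    refine ⟨‖w‖⁻¹ • w, ?_, ?_, ?_⟩
    · rw [real_inner_smul_right]
      have : ⟪(1:ℍ[ℝ]), w⟫ = 0 :=
        (Submodule.mem_orthogonal _ _).mp hwS 1 (Submodule.subset_span (by simp))
      rw [this]; ring
    · rw [real_inner_smul_right]
      have : ⟪u, w⟫ = 0 :=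
        (Submodule.mem_orthogonal _ _).mp hwS u (Submodule.subset_span (by simp))
      rw [this]; ring
    · rw [norm_smul, norm_inv, norm_norm, inv_mul_cancel₀ (norm_ne_zero_iff.mpr hw0)]
    -- v is imaginary
  have hvre : v.re = 0 := by
    rw [← quat_re_eq_inner v, real_inner_comm]; exact hv1
  set w : ℍ[ℝ] := u * v with hw_def
  have hwn : ‖w‖ = 1 := by rw [hw_def, norm_mul, hu, hvn, one_mul]
  have h1w : ⟪(1:ℍ[ℝ]), w⟫ = 0 := by
    have h' := hvu
    rw [hw_def]
    simp [Quaternion.inner_def, Quaternion.re_mul, hure, hvre] at h' ⊢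
    linarith
  have huw : ⟪u, w⟫ = 0 := by
    rw [hw_def]
    simp [Quaternion.inner_def, Quaternion.re_mul, Quaternion.imI_mul, Quaternion.imJ_mul, Quaternion.imK_mul, hure, hvre]
    ring
  have hvw : ⟪v, w⟫ = 0 := by
    rw [hw_def]
    simp [Quaternion.inner_def, Quaternion.re_mul, Quaternion.imI_mul, Quaternion.imJ_mul, Quaternion.imK_mul, hure, hvre]
    ring
  -- orthonormal basis 1, u, v, w
  set B : Fin 4 → ℍ[ℝ] := ![1, u, v, w] with hB_def
  have hB : Orthonormal ℝ B := by
    rw [orthonormal_iff_ite]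
    have n1 : ⟪(1:ℍ[ℝ]), (1:ℍ[ℝ])⟫ = 1 := by
      simp [Quaternion.inner_def]
    have nu : ⟪u, u⟫ = 1 := by
      rw [real_inner_self_eq_norm_sq, hu]; norm_num
    have nv : ⟪v, v⟫ = 1 := by
      rw [real_inner_self_eq_norm_sq, hvn]; norm_num
    have nw : ⟪w, w⟫ = 1 := by
      rw [real_inner_self_eq_norm_sq, hwn]; norm_num
    have h1u : ⟪(1:ℍ[ℝ]), u⟫ = 0 := by
      rw [real_inner_comm, quat_re_eq_inner]; exact hure
    have hu1' : ⟪u, (1:ℍ[ℝ])⟫ = 0 := by rw [real_inner_comm]; exact h1u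
    have hv1' : ⟪v, (1:ℍ[ℝ])⟫ = 0 := by rw [real_inner_comm]; exact hv1
    have hw1' : ⟪w, (1:ℍ[ℝ])⟫ = 0 := by rw [real_inner_comm]; exact h1w
    have hvu' : ⟪v, u⟫ = 0 := by rw [real_inner_comm]; exact hvu
    have hwu' : ⟪w, u⟫ = 0 := by rw [real_inner_comm]; exact huw
    have hwv' : ⟪w, v⟫ = 0 := by rw [real_inner_comm]; exact hvw
    intro i j
    fin_cases i <;> fin_cases j <;>
      norm_num [Fin.ext_iff, hB_def, n1, nu, nv, nw, h1u, hv1, hvu, h1w, huw, hvw,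
        hu1', hv1', hw1', hvu', hwu', hwv', hu, hvn, hwn]
  have hcard : Fintype.card (Fin 4) = Module.finrank ℝ ℍ[ℝ] := by
    simp [Quaternion.finrank_eq_four]
  set b := basisOfLinearIndependentOfCardEqFinrank hB.linearIndependent hcard with hb_def
  have hbc : ⇑b = B := coe_basisOfLinearIndependentOfCardEqFinrank _ _
  set ob := b.toOrthonormalBasis (by rwa [hbc]) with hob_def
  have hobc : ⇑ob = B := by rw [hob_def, Module.Basis.coe_toOrthonormalBasis, hbc]
  -- inner products of J v against the basis
  have hJv1 : ⟪(1:ℍ[ℝ]), J v⟫ = 0 := by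
    rw [real_inner_comm]
    rw [hskew v 1, ← hu_def, real_inner_comm]
    simp [hvu]
  have hJvu : ⟪u, J v⟫ = 0 := by
    rw [hu_def, hpres 1 v, hv1]
  have hJvv : ⟪v, J v⟫ = 0 := by
    have h := hskew v v
    have h2 : ⟪J v, v⟫ = ⟪v, J v⟫ := real_inner_comm _ _
    linarith [h, h2.symm ▸ h]
  set c : ℝ := ⟪w, J v⟫ with hc_def
  have hJv : J v = c • w := by
    have hsum := ob.sum_repr' (J v)
    rw [Fin.sum_univ_four] at hsum
    have e0 : ob 0 = 1 := by rw [hobc]; rfl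
    have e1 : ob 1 = u := by rw [hobc]; rfl
    have e2 : ob 2 = v := by rw [hobc]; rfl
    have e3 : ob 3 = w := by rw [hobc]; rfl
    rw [e0, e1, e2, e3, hJv1, hJvu, hJvv] at hsum
    simpa using hsum.symm
  have hcabs : |c| = 1 := by
    have := hJiso v
    rw [hJv, norm_smul, hwn, hvn] at this
    simpa using this
  have hc : c = 1 ∨ c = -1 := abs_eq (by norm_num : (0:ℝ) ≤ 1) |>.mp hcabs
  -- algebraic facts
  have huu : u * u = -1 := quat_sq_neg_one hure hu
  have hanti : u * v = -(v * u) := quat_anticomm hure hvre hvu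
  refine ⟨u, hu, hure, ?_⟩
  rcases hc with hc | hc
  · -- left multiplication
    left
    have hJv' : J v = u * v := by rw [hJv, hc, one_smul, hw_def]
    have hJw : J w = -v := by
      rw [hw_def, ← hJv', hJ2]
    have hb0 : b 0 = 1 := by rw [hbc]; rfl
    have hb1 : b 1 = u := by rw [hbc]; rfl
    have hb2 : b 2 = v := by rw [hbc]; rfl
    have hb3 : b 3 = w := by rw [hbc]; rfl
    have hJ : J = LinearMap.mulLeft ℝ u := by
      apply b.ext
      intro i
      fin_cases i
      · show J (b 0) = u * b 0
        rw [hb0, ← hu_def, mul_one]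
      · show J (b 1) = u * b 1
        rw [hb1, hu_def, hJ2, huu]
      · show J (b 2) = u * b 2
        rw [hb2, hJv']
      · show J (b 3) = u * b 3
        rw [hb3, hJw, hw_def, ← mul_assoc, huu]
        simp
    intro x
    rw [hJ, LinearMap.mulLeft_apply]
  · -- right multiplication
    right
    have hJv' : J v = v * u := by
      rw [hJv, hc, hw_def]
      rw [hanti]; simp
    have hJw : J w = v := by
      have h := hJ2 v
      rw [hJv'] at h
      have h2 : v * u = -w := by rw [hw_def, hanti]; simp
      rw [h2, map_neg] at h
      exact neg_injective h
    have hb0 : b 0 = 1 := by rw [hbc]; rfl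
    have hb1 : b 1 = u := by rw [hbc]; rfl
    have hb2 : b 2 = v := by rw [hbc]; rfl
    have hb3 : b 3 = w := by rw [hbc]; rfl
    have hJ : J = LinearMap.mulRight ℝ u := by
      apply b.ext
      intro i
      fin_cases i
      · show J (b 0) = b 0 * u
        rw [hb0, ← hu_def, one_mul]
      · show J (b 1) = b 1 * u
        rw [hb1, hu_def, hJ2, huu]
      · show J (b 2) = b 2 * u
        rw [hb2, hJv']
      · show J (b 3) = b 3 * u
        rw [hb3, hJw, hw_def, hanti]
        rw [neg_mul, mul_assoc, huu]
        simp
    intro x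
    rw [hJ, LinearMap.mulRight_apply]
end

section
/- Every non-trivial algebra homomorphism α : ℍ → ℍ is inner: there exists a unit quaternion z such that α(x) = z·x·z̄ for all x ∈ ℍ. -/
open scoped Quaternion
open Quaternion

noncomputable section

private def qi : ℍ[ℝ] := ⟨0,1,0,0⟩
private def qj : ℍ[ℝ] := ⟨0,0,1,0⟩
private def qk : ℍ[ℝ] := ⟨0,0,0,1⟩

private lemma qi_mul_qi : qi * qi = -1 := by ext <;> simp <;> simp [qi]
private lemma qj_mul_qj : qj * qj = -1 := by ext <;> simp <;> simp [qj]
private lemma qi_mul_qj : qi * qj = qk := by ext <;> simp <;> simp [qi, qj, qk]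
private lemma qj_mul_qi : qj * qi = -qk := by ext <;> simp <;> simp [qi, qj, qk]
private lemma qj_ne_zero : qj ≠ 0 := by
  intro h; have := congrArg QuaternionAlgebra.imJ h; simp [qj] at this
private lemma qi_ne_zero : qi ≠ 0 := by
  intro h; have := congrArg QuaternionAlgebra.imI h; simp [qi] at this

private lemma quat_decomp (x : ℍ[ℝ]) :
    x = x.re • 1 + x.imI • qi + x.imJ • qj + x.imK • qk := by
  ext <;> simp <;> simp [qi, qj, qk]

theorem quaternion_algHom_is_inner (α : ℍ[ℝ] →ₐ[ℝ] ℍ[ℝ]) :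
    ∃ z : ℍ[ℝ], ‖z‖ = 1 ∧ ∀ x : ℍ[ℝ], α x = z * x * star z := by
  set i' := α qi with hi'
  set j' := α qj with hj'
  have hi2 : i' * i' = -1 := by rw [hi', ← map_mul, qi_mul_qi, map_neg, map_one]
  have hj2 : j' * j' = -1 := by rw [hj', ← map_mul, qj_mul_qj, map_neg, map_one]
  have hij : i' * j' = -(j' * i') := by
    rw [hi', hj', ← map_mul, ← map_mul, ← map_neg, ← neg_neg (qi * qj), qi_mul_qj,
      qj_mul_qi, neg_neg]
  -- step 1 : find p ≠ 0 with p * qi = i' * p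
  obtain ⟨p, hp0, hpi⟩ : ∃ p : ℍ[ℝ], p ≠ 0 ∧ p * qi = i' * p := by
    by_cases h : i' = -qi
    · refine ⟨qj, qj_ne_zero, ?_⟩
      rw [h, qj_mul_qi, neg_mul, ← qi_mul_qj]
    · refine ⟨1 - i' * qi, fun h0 => h ?_, ?_⟩
      · have h1 : i' * qi = 1 := by rwa [sub_eq_zero, eq_comm] at h0
        calc i' = i' * qi * -qi := by
                  rw [mul_assoc, mul_neg, qi_mul_qi, neg_neg, mul_one]
          _ = -qi := by rw [h1, one_mul]
      · calc (1 - i' * qi) * qi = qi - i' * (qi * qi) := by noncomm_ring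
          _ = qi + i' := by rw [qi_mul_qi]; noncomm_ring
          _ = i' - i' * i' * qi := by rw [hi2]; noncomm_ring
          _ = i' * (1 - i' * qi) := by noncomm_ring
  set j'' : ℍ[ℝ] := p⁻¹ * (j' * p) with hj''
  have hpj'' : p * j'' = j' * p := by rw [hj'', mul_inv_cancel_left₀ hp0]
  have hqi_eq : p⁻¹ * (i' * p) = qi := by rw [← hpi, inv_mul_cancel_left₀ hp0]
  have hjj2 : j'' * j'' = -1 := by
    calc j'' * j'' = p⁻¹ * (j' * (p * j'') ) := by rw [hj'']; noncomm_ring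
      _ = p⁻¹ * (j' * (j' * p)) := by rw [hpj'']
      _ = p⁻¹ * ((j' * j') * p) := by noncomm_ring
      _ = p⁻¹ * (-p) := by rw [hj2]; noncomm_ring
      _ = -1 := by rw [mul_neg, inv_mul_cancel₀ hp0]
  have hanti : j'' * qi = -(qi * j'') := by
    calc j'' * qi = p⁻¹ * (j' * (p * qi)) := by rw [hj'']; noncomm_ring
      _ = p⁻¹ * (j' * (i' * p)) := by rw [hpi]
      _ = p⁻¹ * ((j' * i') * p) := by noncomm_ring
      _ = p⁻¹ * (-(i' * j') * p) := by rw [hij]; noncomm_ring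
      _ = -(p⁻¹ * (i' * (j' * p))) := by noncomm_ring
      _ = -(p⁻¹ * (i' * (p * j''))) := by rw [hpj'']
      _ = -((p⁻¹ * (i' * p)) * j'') := by noncomm_ring
      _ = -(qi * j'') := by rw [hqi_eq]
  -- step 2 : find q ≠ 0 with q * qj = j'' * q and q * qi = qi * q
  obtain ⟨q, hq0, hqj, hqi⟩ :
      ∃ q : ℍ[ℝ], q ≠ 0 ∧ q * qj = j'' * q ∧ q * qi = qi * q := by
    by_cases h : j'' = -qj
    · exact ⟨qi, qi_ne_zero, by rw [h, qi_mul_qj, neg_mul, qj_mul_qi, neg_neg], rfl⟩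
    · refine ⟨1 - j'' * qj, fun h0 => h ?_, ?_, ?_⟩
      · have h1 : j'' * qj = 1 := by rwa [sub_eq_zero, eq_comm] at h0
        calc j'' = j'' * qj * -qj := by
                  rw [mul_assoc, mul_neg, qj_mul_qj, neg_neg, mul_one]
          _ = -qj := by rw [h1, one_mul]
      · calc (1 - j'' * qj) * qj = qj - j'' * (qj * qj) := by noncomm_ring
          _ = qj + j'' := by rw [qj_mul_qj]; noncomm_ring
          _ = j'' - j'' * j'' * qj := by rw [hjj2]; noncomm_ring
          _ = j'' * (1 - j'' * qj) := by noncomm_ring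
      · have hcomm : (j'' * qj) * qi = qi * (j'' * qj) := by
          calc (j'' * qj) * qi = j'' * (qj * qi) := by noncomm_ring
            _ = j'' * (-qk) := by rw [qj_mul_qi]
            _ = -(j'' * (qi * qj)) := by rw [qi_mul_qj]; noncomm_ring
            _ = -((j'' * qi) * qj) := by noncomm_ring
            _ = (qi * j'') * qj := by rw [hanti]; noncomm_ring
            _ = qi * (j'' * qj) := by noncomm_ring
        calc (1 - j'' * qj) * qi = qi - (j'' * qj) * qi := by noncomm_ring
          _ = qi - qi * (j'' * qj) := by rw [hcomm]
          _ = qi * (1 - j'' * qj) := by noncomm_ring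
  set u : ℍ[ℝ] := p * q with hu
  have hu0 : u ≠ 0 := mul_ne_zero hp0 hq0
  have hui : i' * u = u * qi := by
    calc i' * u = (i' * p) * q := by rw [hu]; noncomm_ring
      _ = (p * qi) * q := by rw [hpi]
      _ = p * (qi * q) := by noncomm_ring
      _ = p * (q * qi) := by rw [hqi]
      _ = u * qi := by rw [hu]; noncomm_ring
  have huj : j' * u = u * qj := by
    calc j' * u = (j' * p) * q := by rw [hu]; noncomm_ring
      _ = (p * j'') * q := by rw [hpj'']
      _ = p * (j'' * q) := by noncomm_ring
      _ = p * (q * qj) := by rw [hqj]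
      _ = u * qj := by rw [hu]; noncomm_ring
  have huk : α qk * u = u * qk := by
    rw [← qi_mul_qj, map_mul, ← hi', ← hj']
    calc (i' * j') * u = i' * (j' * u) := by noncomm_ring
      _ = i' * (u * qj) := by rw [huj]
      _ = (i' * u) * qj := by noncomm_ring
      _ = (u * qi) * qj := by rw [hui]
      _ = u * (qi * qj) := by noncomm_ring
  have key : ∀ x : ℍ[ℝ], α x * u = u * x := by
    intro x
    rw [quat_decomp x]
    simp only [map_add, map_smul, map_one, add_mul, mul_add, smul_mul_assoc,
      mul_smul_comm, ← hi', ← hj', hui, huj, huk, one_mul, mul_one]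
  set z : ℍ[ℝ] := ‖u‖⁻¹ • u with hz
  have hns : normSq u ≠ 0 := normSq_ne_zero.mpr hu0
  have hnorm : (‖u‖⁻¹ * ‖u‖⁻¹) = (normSq u)⁻¹ := by
    rw [← mul_inv, ← normSq_eq_norm_mul_self]
  have hstarz : star z = ‖u‖⁻¹ • star u := by rw [hz, Quaternion.star_smul]
  have hzz : z * star z = 1 := by
    rw [hz, hstarz, smul_mul_assoc, mul_smul_comm, smul_smul, hnorm, self_mul_star,
      Quaternion.smul_coe, inv_mul_cancel₀ hns, Quaternion.coe_one]
  have keyz : ∀ x : ℍ[ℝ], α x * z = z * x := by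
    intro x
    rw [hz, mul_smul_comm, key, smul_mul_assoc]
  refine ⟨z, ?_, ?_⟩
  · rw [hz, norm_smul, norm_inv, norm_norm, inv_mul_cancel₀ (norm_ne_zero_iff.mpr hu0)]
  · intro x
    calc α x = α x * (z * star z) := by rw [hzz, mul_one]
      _ = (α x * z) * star z := by rw [mul_assoc]
      _ = z * x * star z := by rw [keyz]

end
end

section
/- Let x be a unit imaginary quaternion and let P ⊆ ℍ be a 2-dimensional real subspace. Then P is invariant under left multiplication by x (i.e., J_x-complex) if and only if for every unit imaginary quaternion y orthogonal to x, the form ω_y(ξ,ν) = ⟨ξ, y·ν⟩ vanishes identically on P. -/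
open scoped Quaternion
open Quaternion Module

set_option maxHeartbeats 1000000 in
theorem complex_iff_lagrangian (x : ℍ[ℝ]) (hx : ‖x‖ = 1) (hxi : x.re = 0)
    (P : Submodule ℝ ℍ[ℝ]) (hP : Module.finrank ℝ P = 2) :
    (∀ p ∈ P, x * p ∈ P) ↔
      ∀ y : ℍ[ℝ], ‖y‖ = 1 → y.re = 0 → (y * star x).re = 0 →
        ∀ ξ ∈ P, ∀ ν ∈ P, (ξ * star (y * ν)).re = 0 := by
  have hxne : x ≠ 0 := by
    intro hh; rw [hh, norm_zero] at hx; norm_num at hx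
  constructor
  · -- forward
    intro hinv y hy hyi hyx ξ hξ ν hν
    by_cases hν0 : ν = 0
    · simp [hν0]
    have hxν : x * ν ∈ P := hinv ν hν
    have hli : LinearIndependent ℝ ![ν, x * ν] := by
      rw [LinearIndependent.pair_iff]
      intro s t hst
      have h1 : ((s : ℍ[ℝ]) + t • x) * ν = 0 := by
        rw [add_mul, smul_mul_assoc, Quaternion.coe_mul_eq_smul]
        exact hst
      have h2 : (s : ℍ[ℝ]) + t • x = 0 := by
        rcases mul_eq_zero.mp h1 with h | h
        · exact h
        · exact absurd h hν0
      have hs : s = 0 := by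
        have := congrArg QuaternionAlgebra.re h2
        simpa [hxi] using this
      refine ⟨hs, ?_⟩
      rw [hs] at h2
      simp only [Quaternion.coe_zero, zero_add, smul_eq_zero] at h2
      tauto
    have hsp : Submodule.span ℝ {ν, x * ν} = P := by
      apply Submodule.eq_of_le_of_finrank_eq
      · rw [Submodule.span_le]
        rintro a ha
        simp only [Set.mem_insert_iff, Set.mem_singleton_iff] at ha
        rcases ha with rfl | rfl
        · exact hν
        · exact hxν
      · rw [hP, show ({ν, x * ν} : Set ℍ[ℝ]) = Set.range ![ν, x * ν] by
          rw [show Set.range ![ν, x * ν] = {ν, x * ν} by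
            simp [Matrix.range_cons, Matrix.range_empty]; exact Set.pair_comm _ _]]
        rw [finrank_span_eq_card hli]
        simp
    obtain ⟨a, b, hab⟩ := Submodule.mem_span_pair.mp (hsp ▸ hξ)
    rw [← hab]
    simp only [Quaternion.re_mul, Quaternion.re_add, Quaternion.imI_add, Quaternion.imJ_add,
      Quaternion.imK_add, Quaternion.re_smul, Quaternion.imI_smul, Quaternion.imJ_smul,
      Quaternion.imK_smul, Quaternion.imI_mul, Quaternion.imJ_mul, Quaternion.imK_mul,
      Quaternion.re_star, Quaternion.imI_star, Quaternion.imJ_star, Quaternion.imK_star,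
      smul_eq_mul] at hyx ⊢
    linear_combination (a * (ν.re^2 + ν.imI^2 + ν.imJ^2 + ν.imK^2)) * hyi +
      (b * (ν.re^2 + ν.imI^2 + ν.imJ^2 + ν.imK^2)) * hyx
  · -- backward
    intro h p hp
    by_cases hp0 : p = 0
    · rw [hp0, mul_zero]; exact P.zero_mem
    have key : ∀ y : ℍ[ℝ], y.re = 0 → (y * star x).re = 0 →
        ∀ ξ ∈ P, ∀ ν ∈ P, (ξ * star (y * ν)).re = 0 := by
      intro y hyi hyx ξ hξ ν hν
      by_cases hy0 : y = 0
      · simp [hy0]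
      have hn : ‖y‖ ≠ 0 := norm_ne_zero_iff.2 hy0
      have h1 := h (‖y‖⁻¹ • y) (by
          rw [norm_smul]
          simp [abs_of_nonneg (norm_nonneg y), inv_mul_cancel₀ hn])
        (by simp [hyi]) (by simp [smul_mul_assoc, hyx]) ξ hξ ν hν
      have h2 : (ξ * star (y * ν)).re
          = ‖y‖ * (ξ * star ((‖y‖⁻¹ • y) * ν)).re := by
        rw [smul_mul_assoc, Quaternion.star_smul, mul_smul_comm]
        simp only [Quaternion.re_smul, smul_eq_mul, star_trivial]
        field_simp
      rw [h2, h1, mul_zero]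
    set V := (Submodule.span ℝ {(1 : ℍ[ℝ]), x})ᗮ with hVdef
    have hmemV : ∀ y ∈ V, y.re = 0 ∧ (y * star x).re = 0 := by
      intro y hy
      have h1 := (Submodule.mem_orthogonal _ _).mp hy 1
        (Submodule.subset_span (Set.mem_insert _ _))
      have h2 := (Submodule.mem_orthogonal _ _).mp hy x
        (Submodule.subset_span (Set.mem_insert_iff.2 (Or.inr rfl)))
      simp only [Quaternion.inner_def] at h1 h2
      constructor
      · simpa using h1
      · simp only [Quaternion.re_mul, Quaternion.re_star, Quaternion.imI_star,
          Quaternion.imJ_star, Quaternion.imK_star] at h2 ⊢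
        linarith
    have hli : LinearIndependent ℝ ![(1 : ℍ[ℝ]), x] := by
      rw [LinearIndependent.pair_iff]
      intro s t hst
      have h2 : (s : ℍ[ℝ]) + t • x = 0 := by
        simpa [Quaternion.coe_one, ← Quaternion.coe_mul_eq_smul] using hst
      have hs : s = 0 := by
        have := congrArg QuaternionAlgebra.re h2
        simpa [hxi] using this
      refine ⟨hs, ?_⟩
      rw [hs] at h2
      simp only [Quaternion.coe_zero, zero_add, smul_eq_zero] at h2
      tauto
    have hfour : Module.finrank ℝ ℍ[ℝ] = 4 := Quaternion.finrank_eq_four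
    have hspan2 : finrank ℝ (Submodule.span ℝ {(1 : ℍ[ℝ]), x}) = 2 := by
      rw [show ({(1 : ℍ[ℝ]), x} : Set ℍ[ℝ]) = Set.range ![(1 : ℍ[ℝ]), x] by
        rw [show Set.range ![(1 : ℍ[ℝ]), x] = {(1 : ℍ[ℝ]), x} by
          simp [Matrix.range_cons, Matrix.range_empty]; exact Set.pair_comm _ _]]
      rw [finrank_span_eq_card hli]; simp
    have hV2 : finrank ℝ V = 2 := by
      have := Submodule.finrank_add_finrank_orthogonal
        (K := Submodule.span ℝ {(1 : ℍ[ℝ]), x})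
      rw [hfour, hspan2] at this
      rw [hVdef]
      omega
    have hinj : Function.Injective (LinearMap.mulRight ℝ p) :=
      fun a b hab => mul_right_cancel₀ hp0 (by simpa using hab)
    set W := V.map (LinearMap.mulRight ℝ p) with hWdef
    have hW2 : finrank ℝ W = 2 := by
      rw [← hV2]
      exact (LinearEquiv.finrank_eq (Submodule.equivMapOfInjective _ hinj V)).symm
    have hWP : W ≤ Pᗮ := by
      rintro w hw
      obtain ⟨y, hyV, rfl⟩ := hw
      rw [Submodule.mem_orthogonal]
      intro u hu
      obtain ⟨hyi, hyx⟩ := hmemV y hyV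
      simpa [Quaternion.inner_def, LinearMap.mulRight_apply] using key y hyi hyx u hu p hp
    have hPerp2 : finrank ℝ Pᗮ = 2 := by
      have := Submodule.finrank_add_finrank_orthogonal (K := P)
      rw [hfour, hP] at this
      omega
    have hWeq : W = Pᗮ := Submodule.eq_of_le_of_finrank_eq hWP (by rw [hW2, hPerp2])
    have hPW : P = Wᗮ := by rw [hWeq, Submodule.orthogonal_orthogonal]
    rw [hPW, Submodule.mem_orthogonal]
    intro u hu
    obtain ⟨y, hyV, rfl⟩ := hu
    obtain ⟨hyi, hyx⟩ := hmemV y hyV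
    simp only [Quaternion.inner_def, LinearMap.mulRight_apply]
    simp only [Quaternion.re_mul, Quaternion.imI_mul, Quaternion.imJ_mul, Quaternion.imK_mul,
      Quaternion.re_star, Quaternion.imI_star, Quaternion.imJ_star, Quaternion.imK_star] at hyx ⊢
    linear_combination (p.re^2 + p.imI^2 + p.imJ^2 + p.imK^2) * hyx
end

section
/- Let A be a 2×2 real matrix and P = {(x, Ax) : x ∈ ℝ²}. Define ω_j((x₁,y₁),(x₂,y₂)) = ⟨x₁,J₀y₂⟩ + ⟨y₁,J₀x₂⟩ (using the complex structure J((x,y)) = (J₀y, J₀x)). Then P is ω_j-lagrangian if and only if tr(A) = 0. -/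
/-!
In dimension two, `Aᵀ J₀ + J₀ A = (tr A) J₀` for every matrix `A`, so the restriction of `ω_j`
to the graph of `A` is `tr A` times the area form `⟨x₁, J₀ x₂⟩`, which is not identically zero.
-/

open Matrix

namespace Matrix

variable {R : Type*} [CommRing R]

theorem transpose_mul_rot_add_rot_mul (A : Matrix (Fin 2) (Fin 2) R) :
    Aᵀ * !![0, -1; 1, 0] + !![0, -1; 1, 0] * A = A.trace • !![0, -1; 1, 0] := by
  ext i j
  fin_cases i <;> fin_cases j <;>
    simp [trace, mul_apply, vecMul, dotProduct, Fin.sum_univ_two] <;> ring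

theorem dotProduct_rot_mulVec_add_mulVec_dotProduct_rot (A : Matrix (Fin 2) (Fin 2) R)
    (x y : Fin 2 → R) :
    x ⬝ᵥ !![0, -1; 1, 0] *ᵥ (A *ᵥ y) + A *ᵥ x ⬝ᵥ !![0, -1; 1, 0] *ᵥ y =
      A.trace * (x ⬝ᵥ !![0, -1; 1, 0] *ᵥ y) := by
  rw [dotProduct_comm (A *ᵥ x), ← dotProduct_transpose_mulVec A x, mulVec_mulVec, mulVec_mulVec,
    add_comm, ← dotProduct_add, ← add_mulVec, transpose_mul_rot_add_rot_mul, smul_mulVec,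
    dotProduct_smul, smul_eq_mul]

theorem one_zero_dotProduct_rot_mulVec_zero_one :
    ![1, 0] ⬝ᵥ (!![0, -1; 1, 0] : Matrix (Fin 2) (Fin 2) R) *ᵥ ![0, 1] = -1 := by
  simp [dotProduct, Fin.sum_univ_two]

end Matrix

theorem omega_j_lagrangian_iff_trace_zero (A : Matrix (Fin 2) (Fin 2) ℝ) :
    (∀ x₁ x₂ : Fin 2 → ℝ,
      x₁ ⬝ᵥ (!![0,-1;1,0] : Matrix (Fin 2) (Fin 2) ℝ).mulVec (A.mulVec x₂) +
        A.mulVec x₁ ⬝ᵥ (!![0,-1;1,0] : Matrix (Fin 2) (Fin 2) ℝ).mulVec x₂ = 0)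
      ↔ A.trace = 0 := by
  simp only [dotProduct_rot_mulVec_add_mulVec_dotProduct_rot]
  constructor
  · intro h
    have h₀₁ := h ![1, 0] ![0, 1]
    rwa [one_zero_dotProduct_rot_mulVec_zero_one, mul_neg_one, neg_eq_zero] at h₀₁
  · intro h x₁ x₂
    rw [h, zero_mul]
end

section
/- Define m((z₁,w₁),(z₂,w₂)) := ⟨z₁,w₂⟩ + ⟨z₂,w₁⟩ on ℂ⊕ℂ, and let I, J, K be the compatible complex structures I(z,w)=(iz,-iw), J(z,w)=(iw,iz), K(z,w)=(-w,z). Then m vanishes on V := {0}⊕ℂ and satisfies m = -m(I·,I·) = m(J·,J·) = -m(K·,K·). Moreover, up to sign, m is the unique unit-norm symmetric bilinear form with these properties. -/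
open Complex

/-- The symmetric bilinear form `m((z₁,w₁),(z₂,w₂)) = ⟨z₁,w₂⟩ + ⟨z₂,w₁⟩` on `ℂ⊕ℂ`. -/
def mForm (p q : ℂ × ℂ) : ℝ := (p.1 * (starRingEnd ℂ) q.2).re + (q.1 * (starRingEnd ℂ) p.2).re

/-- `I(z,w) = (iz, -iw)`. -/
def Istr (p : ℂ × ℂ) : ℂ × ℂ := (Complex.I * p.1, -(Complex.I * p.2))

/-- `J(z,w) = (iw, iz)`. -/
def Jstr (p : ℂ × ℂ) : ℂ × ℂ := (Complex.I * p.2, Complex.I * p.1)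

/-- `K(z,w) = (-w, z)`. -/
def Kstr (p : ℂ × ℂ) : ℂ × ℂ := (-p.2, p.1)

/-- Any symmetric bilinear form vanishing on `V` and `J`-invariant is a multiple of `mForm`. -/
lemma mForm_unique_aux (m' : (ℂ × ℂ) →ₗ[ℝ] (ℂ × ℂ) →ₗ[ℝ] ℝ)
    (hs : ∀ p q, m' p q = m' q p)
    (h0 : ∀ w w' : ℂ, m' (0, w) (0, w') = 0)
    (hJ : ∀ p q, m' p q = m' (Jstr p) (Jstr q)) (p q : ℂ × ℂ) :
    m' p q = (m' (1,0) (0,1)) * mForm p q := by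
  set c := m' (1,0) (0,1) with hc
  have he11 : m' (1,0) (1,0) = 0 := by
    have h := hJ (1,0) (1,0); simp only [Jstr, mul_one, mul_zero] at h
    rw [h]; exact h0 _ _
  have he22 : m' (Complex.I,0) (Complex.I,0) = 0 := by
    have h := hJ (Complex.I,0) (Complex.I,0)
    simp only [Jstr, mul_zero, Complex.I_mul_I] at h
    rw [h]; exact h0 _ _
  have he12 : m' (1,0) (Complex.I,0) = 0 := by
    have h := hJ (1,0) (Complex.I,0)
    simp only [Jstr, mul_one, mul_zero, Complex.I_mul_I] at h
    rw [h]; exact h0 _ _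
  have hneg1 : ∀ a b : ℂ × ℂ, m' (-a) b = -(m' a b) := by
    intro a b; rw [map_neg]; rfl
  have hA : m' (1,0) (0,Complex.I) = 0 := by
    have h := hJ (1,0) (0,Complex.I)
    simp only [Jstr, mul_one, mul_zero, Complex.I_mul_I] at h
    have h2 : ((-1 : ℂ), (0:ℂ)) = -((1:ℂ),(0:ℂ)) := by simp
    rw [h2, map_neg, hs (0,Complex.I) (1,0)] at h
    linarith
  have hB : m' (Complex.I,0) (0,1) = 0 := by
    have h := hJ (Complex.I,0) (0,1)
    simp only [Jstr, mul_one, mul_zero, Complex.I_mul_I] at h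
    have h2 : ((0 : ℂ), (-1:ℂ)) = -((0:ℂ),(1:ℂ)) := by simp
    rw [h2, hneg1, hs (0,(1:ℂ)) (Complex.I,0)] at h
    linarith
  have hC : m' (Complex.I,0) (0,Complex.I) = c := by
    have h := hJ (Complex.I,0) (0,Complex.I)
    simp only [Jstr, mul_zero, Complex.I_mul_I] at h
    have h2 : ((0 : ℂ), (-1:ℂ)) = -((0:ℂ),(1:ℂ)) := by simp
    have h3 : ((-1 : ℂ), (0:ℂ)) = -((1:ℂ),(0:ℂ)) := by simp
    rw [h2, h3, hneg1, map_neg] at h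
    simp only [neg_neg] at h
    rw [hc, hs (1,0)]
    exact h
  have hd : ∀ r : ℂ × ℂ,
      r = r.1.re • ((1:ℂ),(0:ℂ)) + r.1.im • (Complex.I,0) + r.2.re • (0,1) + r.2.im • (0,Complex.I) := by
    intro r; simp [Prod.ext_iff, Complex.ext_iff]
  rw [hd p, hd q]
  simp only [map_add, map_smul, LinearMap.add_apply, LinearMap.smul_apply, smul_eq_mul,
    he11, he22, he12, hA, hB, hC, h0, hs (Complex.I,0) (1,0), hs (0,(1:ℂ)) (1,0),
    hs (0,(1:ℂ)) (Complex.I,0), hs (0,Complex.I) (1,0), hs (0,Complex.I) (Complex.I,0)]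
  simp [mForm, Complex.mul_re]
  ring

lemma mForm_self_bound (p : ℂ × ℂ) (h : ‖p.1‖ ^ 2 + ‖p.2‖ ^ 2 = 1) :
    |mForm p p| ≤ 1 := by
  rw [← Complex.normSq_eq_norm_sq, ← Complex.normSq_eq_norm_sq, Complex.normSq_apply,
    Complex.normSq_apply] at h
  rw [abs_le]
  simp only [mForm, Complex.mul_re, Complex.conj_re, Complex.conj_im]
  constructor <;> nlinarith [sq_nonneg (p.1.re - p.2.re), sq_nonneg (p.1.im - p.2.im),
    sq_nonneg (p.1.re + p.2.re), sq_nonneg (p.1.im + p.2.im)]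

lemma sqrt2_abs_sq : ‖((((Real.sqrt 2)⁻¹ : ℝ) : ℂ))‖ ^ 2 = 1/2 := by
  rw [Complex.norm_real, Real.norm_eq_abs, _root_.sq_abs, ← Real.sqrt_inv, Real.sq_sqrt (by norm_num)]
  norm_num

lemma mForm_witness : mForm ((((Real.sqrt 2)⁻¹ : ℝ) : ℂ), (((Real.sqrt 2)⁻¹ : ℝ) : ℂ))
    ((((Real.sqrt 2)⁻¹ : ℝ) : ℂ), (((Real.sqrt 2)⁻¹ : ℝ) : ℂ)) = 1 := by
  simp only [mForm, Complex.mul_re, Complex.conj_re, Complex.conj_im, Complex.ofReal_re,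
    Complex.ofReal_im]
  have h2 : (Real.sqrt 2)⁻¹ * (Real.sqrt 2)⁻¹ = 1/2 := by
    rw [← mul_inv, Real.mul_self_sqrt (by norm_num)]
    norm_num
  linarith

theorem characterisation_of_m :
    (∀ w w' : ℂ, mForm (0, w) (0, w') = 0) ∧
    (∀ p q : ℂ × ℂ, mForm p q = -mForm (Istr p) (Istr q)) ∧
    (∀ p q : ℂ × ℂ, mForm p q = mForm (Jstr p) (Jstr q)) ∧
    (∀ p q : ℂ × ℂ, mForm p q = -mForm (Kstr p) (Kstr q)) ∧
    (∀ m' : (ℂ × ℂ) →ₗ[ℝ] (ℂ × ℂ) →ₗ[ℝ] ℝ,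
      (∀ p q, m' p q = m' q p) →
      (∀ w w' : ℂ, m' (0, w) (0, w') = 0) →
      (∀ p q, m' p q = -m' (Istr p) (Istr q)) →
      (∀ p q, m' p q = m' (Jstr p) (Jstr q)) →
      (∀ p q, m' p q = -m' (Kstr p) (Kstr q)) →
      -- unit norm: the supremum of |m'(p,p)| over the euclidean unit sphere is 1
      IsGreatest {r : ℝ | ∃ p : ℂ × ℂ, ‖p.1‖ ^ 2 + ‖p.2‖ ^ 2 = 1 ∧
        r = |m' p p|} 1 →
      (∀ p q, m' p q = mForm p q) ∨ (∀ p q, m' p q = -mForm p q)) := by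
  refine ⟨fun w w' => by simp [mForm], ?_, ?_, ?_, ?_⟩
  · intro p q; simp [mForm, Istr, Complex.mul_re, Complex.mul_im]; ring
  · intro p q; simp [mForm, Jstr, Complex.mul_re, Complex.mul_im]; ring
  · intro p q; simp [mForm, Kstr, Complex.mul_re, Complex.mul_im]; ring
  · intro m' hs h0 hI hJ hK hn
    set c := m' (1,0) (0,1) with hc
    have key : ∀ p q, m' p q = c * mForm p q := mForm_unique_aux m' hs h0 hJ
    -- the witness point
    set r : ℝ := (Real.sqrt 2)⁻¹ with hr
    set p0 : ℂ × ℂ := ((r : ℂ), (r : ℂ)) with hp0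
    have hmem : |c| ∈ {r : ℝ | ∃ p : ℂ × ℂ, ‖p.1‖ ^ 2 + ‖p.2‖ ^ 2 = 1 ∧
        r = |m' p p|} := by
      refine ⟨p0, ?_, ?_⟩
      · show ‖(r:ℂ)‖ ^ 2 + ‖(r:ℂ)‖ ^ 2 = 1
        rw [sqrt2_abs_sq]; norm_num
      · rw [key, abs_mul]
        show |c| = |c| * |mForm p0 p0|
        rw [show mForm p0 p0 = 1 from mForm_witness]
        simp
    have hle : |c| ≤ 1 := hn.2 hmem
    have hge : 1 ≤ |c| := by
      obtain ⟨p, hp, hpr⟩ := hn.1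
      rw [key, abs_mul] at hpr
      have hb := mForm_self_bound p hp
      have habs : (0:ℝ) ≤ |c| := abs_nonneg c
      nlinarith [abs_nonneg (mForm p p)]
    have hc1 : c = 1 ∨ c = -1 := by
      rcases abs_eq (by norm_num : (0:ℝ) ≤ 1) |>.mp (le_antisymm hle hge) with h | h
      · left; exact h
      · right; exact h
    rcases hc1 with h | h
    · left; intro p q; rw [key, h, one_mul]
    · right; intro p q; rw [key, h]; ring
end

section
/- The stabiliser in SO(4) of the quadruple (I,J,K,m) equals the diagonal subgroup Σ = {diag(A,A) : A ∈ SO(2)}, and Σ is also the stabiliser of the triple (J, V, ω) where V = {0}⊕ℂ with orientation form ω. -/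
open Complex

lemma key_decomp (M : (ℂ × ℂ) →ₗ[ℝ] (ℂ × ℂ)) (p : ℂ × ℂ) :
    M p = p.1.re • M (1,0) + p.1.im • M (Complex.I,0)
        + p.2.re • M (0,1) + p.2.im • M (0,Complex.I) := by
  have h : p = p.1.re • ((1:ℂ),(0:ℂ)) + p.1.im • ((Complex.I:ℂ),(0:ℂ))
        + p.2.re • ((0:ℂ),(1:ℂ)) + p.2.im • ((0:ℂ),(Complex.I:ℂ)) := by
    ext
    · simp [Complex.real_smul, Complex.ext_iff]
    · simp [Complex.real_smul, Complex.ext_iff]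
  conv_lhs => rw [h]
  simp only [map_add, map_smul]

lemma unit_of (c d : ℂ) (hc : Complex.normSq c = 1) (hd : Complex.normSq d = 1)
    (h : ((starRingEnd ℂ) c * d).re = 1) : d = c := by
  have h2 : Complex.normSq ((starRingEnd ℂ) c * d) = 1 := by
    simp [Complex.normSq_mul, hc, hd]
  have him : ((starRingEnd ℂ) c * d).im = 0 := by
    have := Complex.normSq_apply ((starRingEnd ℂ) c * d)
    nlinarith [this, h2, h]
  have hu : (starRingEnd ℂ) c * d = 1 := by
    apply Complex.ext <;> simp [h, him]
  have := congrArg (fun z => c * z) hu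
  simp only [← mul_assoc, Complex.mul_conj, mul_one] at this
  rw [← this]
  simp [Complex.ext_iff, hc]


/-- The standard euclidean inner product on `ℂ⊕ℂ ≅ ℝ⁴`. -/
def gE (p q : ℂ × ℂ) : ℝ := (p.1 * (starRingEnd ℂ) q.1).re + (p.2 * (starRingEnd ℂ) q.2).re

/-- An orientation form on the vertical subspace `V = {0}⊕ℂ`. -/
def omegaV (p q : ℂ × ℂ) : ℝ := ((starRingEnd ℂ) p.2 * q.2).im

theorem stabiliser_subgroup (M : (ℂ × ℂ) →ₗ[ℝ] (ℂ × ℂ))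
    (hiso : ∀ p q : ℂ × ℂ, gE (M p) (M q) = gE p q)
    (hdet : LinearMap.det M = 1) :
    -- M stabilises (I,J,K,m) iff M = diag(A,A) with A ∈ SO(2):
    (((∀ p, M (Istr p) = Istr (M p)) ∧ (∀ p, M (Jstr p) = Jstr (M p)) ∧
        (∀ p, M (Kstr p) = Kstr (M p)) ∧ (∀ p q, mForm (M p) (M q) = mForm p q)) ↔
      ∃ a : ℂ, ‖a‖ = 1 ∧ ∀ p : ℂ × ℂ, M p = (a * p.1, a * p.2)) ∧
    -- M stabilises (J, V, ω) iff M = diag(A,A) with A ∈ SO(2):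
    (((∀ p, M (Jstr p) = Jstr (M p)) ∧ (∀ w : ℂ, (M (0, w)).1 = 0) ∧
        (∀ w w' : ℂ, omegaV (M (0, w)) (M (0, w')) = omegaV (0, w) (0, w'))) ↔
      ∃ a : ℂ, ‖a‖ = 1 ∧ ∀ p : ℂ × ℂ, M p = (a * p.1, a * p.2)) := by
  constructor
  · constructor
    · rintro ⟨hI, hJ, hK, hm⟩
      set a := (M (1,0)).1 with ha_def
      set b := (M (1,0)).2 with hb_def
      have hM10 : M (1,0) = (a, b) := by rw [ha_def, hb_def]
      have hMI0 : M (Complex.I, 0) = (Complex.I * a, -(Complex.I * b)) := by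
        have h := hI (1,0)
        simp only [Istr, mul_one, mul_zero, neg_zero] at h
        rw [h, hM10]
      have hM01 : M (0, 1) = (-b, a) := by
        have h := hK (1,0)
        simp only [Kstr, neg_zero] at h
        rw [h, hM10]
      have hM0I : M (0, Complex.I) = (Complex.I * b, Complex.I * a) := by
        have h := hK (Complex.I, 0)
        simp only [Kstr, neg_zero] at h
        rw [h, hMI0]
        simp
      have hform : ∀ p : ℂ × ℂ, M p =
          (a * p.1 - b * (starRingEnd ℂ) p.2, b * (starRingEnd ℂ) p.1 + a * p.2) := by
        intro p
        rw [key_decomp M p, hM10, hMI0, hM01, hM0I]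
        simp only [Prod.smul_mk, Prod.mk_add_mk, Complex.real_smul, Prod.mk.injEq]
        constructor <;>
        · simp [Complex.ext_iff]
          constructor <;> ring
      have h1 := hiso (1,0) (1,0)
      rw [hM10] at h1
      simp only [gE, Complex.mul_conj, Complex.ofReal_re, map_one, mul_one, map_zero,
        mul_zero, Complex.one_re, Complex.zero_re] at h1
      have h2 := hm (1,0) (0,1)
      rw [hM10, hM01] at h2
      simp only [mForm, Complex.mul_conj, map_one, mul_one, map_zero, mul_zero,
        Complex.one_re, Complex.zero_re, neg_mul, Complex.neg_re, Complex.ofReal_re] at h2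
      have hb0 : b = 0 := by
        have : Complex.normSq b = 0 := by linarith
        exact Complex.normSq_eq_zero.mp this
      have hna : Complex.normSq a = 1 := by
        rw [hb0] at h1; simpa using h1
      refine ⟨a, ?_, ?_⟩
      · rw [Complex.norm_def, hna, Real.sqrt_one]
      · intro p
        rw [hform p, hb0]
        simp
    · rintro ⟨a, ha, hM⟩
      have haa : a * (starRingEnd ℂ) a = 1 := by
        rw [Complex.mul_conj, Complex.normSq_eq_norm_sq, ha]
        norm_num
      have key : ∀ z w : ℂ, (a * z) * (starRingEnd ℂ) (a * w) = z * (starRingEnd ℂ) w := by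
        intro z w
        rw [map_mul, show a * z * ((starRingEnd ℂ) a * (starRingEnd ℂ) w)
            = (a * (starRingEnd ℂ) a) * (z * (starRingEnd ℂ) w) from by ring, haa, one_mul]
      refine ⟨?_, ?_, ?_, ?_⟩
      · intro p; simp only [hM, Istr, Prod.mk.injEq]; constructor <;> ring
      · intro p; simp only [hM, Jstr, Prod.mk.injEq]; constructor <;> ring
      · intro p; simp only [hM, Kstr, Prod.mk.injEq]; simp [mul_neg]
      · intro p q; simp only [hM, mForm, key]
  · constructor
    · rintro ⟨hJ, hV, hω⟩
      have hz2 : ∀ z : ℂ, (M (z, 0)).2 = 0 := by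
        intro z
        have h1 := hJ (z, 0)
        have h2 := hV (Complex.I * z)
        simp only [Jstr, mul_zero] at h1
        rw [h1] at h2
        simpa [Complex.I_ne_zero] using h2
      set d := (M (1,0)).1 with hd_def
      set c := (M (0,1)).2 with hc_def
      have hM10 : M (1,0) = (d, 0) := by
        rw [hd_def]; exact Prod.ext rfl (hz2 1)
      have hM01 : M (0,1) = (0, c) := by
        rw [hc_def]; exact Prod.ext (hV 1) rfl
      have hMI0 : M (Complex.I, 0) = (Complex.I * c, 0) := by
        have h := hJ (0, 1)
        simp only [Jstr, mul_one, mul_zero] at h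
        rw [h, hM01]
        simp
      have hM0I : M (0, Complex.I) = (0, Complex.I * d) := by
        have h := hJ (1, 0)
        simp only [Jstr, mul_one, mul_zero] at h
        rw [h, hM10]
        simp
      have hnd : Complex.normSq d = 1 := by
        have h := hiso (1,0) (1,0)
        rw [hM10] at h
        simpa [gE, Complex.mul_conj] using h
      have hnc : Complex.normSq c = 1 := by
        have h := hiso (0,1) (0,1)
        rw [hM01] at h
        simpa [gE, Complex.mul_conj] using h
      have hcd : ((starRingEnd ℂ) c * d).re = 1 := by
        have h := hω 1 Complex.I
        rw [hM01, hM0I] at h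
        simp only [omegaV, map_one, one_mul] at h
        have e : ((starRingEnd ℂ) c * (Complex.I * d)).im = ((starRingEnd ℂ) c * d).re := by
          simp [Complex.mul_im, Complex.mul_re]
        rw [e] at h
        simpa using h
      have hdc : d = c := unit_of c d hnc hnd hcd
      refine ⟨c, ?_, ?_⟩
      · rw [Complex.norm_def, hnc, Real.sqrt_one]
      · intro p
        rw [key_decomp M p, hM10, hMI0, hM01, hM0I, hdc]
        simp only [Prod.smul_mk, Prod.mk_add_mk, Complex.real_smul, Prod.mk.injEq]
        constructor <;>
        · simp [Complex.ext_iff]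
          constructor <;> ring
    · rintro ⟨a, ha, hM⟩
      have haa : (starRingEnd ℂ) a * a = 1 := by
        rw [mul_comm, Complex.mul_conj, Complex.normSq_eq_norm_sq, ha]
        norm_num
      refine ⟨?_, ?_, ?_⟩
      · intro p; simp only [hM, Jstr, Prod.mk.injEq]; constructor <;> ring
      · intro w; simp [hM]
      · intro w w'
        simp only [hM, omegaV, map_mul]
        rw [show (starRingEnd ℂ) a * (starRingEnd ℂ) w * (a * w')
            = ((starRingEnd ℂ) a * a) * ((starRingEnd ℂ) w * w') from by ring, haa, one_mul]
end

section
/- Let L ⊆ ℂ⊕ℂ be a J-complex line, where J(z,w) = (iw,iz). Then the restriction of m((z₁,w₁),(z₂,w₂)) = ⟨z₁,w₂⟩+⟨z₂,w₁⟩ to L is either positive-definite, negative-definite, or identically zero; and it is identically zero if and only if L intersects V = {0}⊕ℂ non-trivially, i.e., if and only if the first projection π₁ has non-trivial kernel on L. -/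
open Complex

/-!
Since `J² = -1`, any nonzero `p` in a `J`-complex line `L` spans `L` together with `J p`, and
`m(a p + b J p, c p + d J p) = (a c + b d) m(p, p)`. So `m` on `L` is `m(p, p)` times the euclidean
inner product in the coordinates `(a, b)`, which gives the trichotomy; in particular `m` vanishes on
`L` as soon as it vanishes on one nonzero vector, e.g. one of `V = {0} ⊕ ℂ`. Conversely, for
`p = (z, w)` the first coordinates `z` and `i w` of `p` and `J p` satisfy `Im (z · conj (i w)) = -Re (z w̄)`,
so they are `ℝ`-linearly dependent when `m(p, p) = 2 Re (z w̄) = 0`, and the dependence produces a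
nonzero vector of `L ∩ V`.
-/

open ComplexConjugate

lemma mForm_self (p : ℂ × ℂ) : mForm p p = 2 * (p.1 * conj p.2).re := by
  rw [mForm]; ring

lemma mForm_smul_add_smul_Jstr (p : ℂ × ℂ) (a b c d : ℝ) :
    mForm (a • p + b • Jstr p) (c • p + d • Jstr p) = (a * c + b * d) * mForm p p := by
  obtain ⟨z, w⟩ := p
  simp only [mForm, Jstr, Prod.smul_mk, Prod.mk_add_mk, real_smul, map_add, map_mul,
    conj_ofReal, conj_I, mul_re, mul_im, add_re, add_im, ofReal_re, ofReal_im, I_re, I_im,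
    conj_re, conj_im, neg_re, neg_im]
  ring

lemma linearIndependent_Jstr {p : ℂ × ℂ} (hp : p ≠ 0) : LinearIndependent ℝ ![p, Jstr p] := by
  refine LinearIndependent.pair_iff.mpr fun a b h ↦ ?_
  have h₁ : (a : ℂ) * p.1 + b * (I * p.2) = 0 := by simpa [Jstr, real_smul] using congrArg Prod.fst h
  have h₂ : (a : ℂ) * p.2 + b * (I * p.1) = 0 := by simpa [Jstr, real_smul] using congrArg Prod.snd h
  -- applying `J` to `a p + b J p = 0` and recombining kills the cross terms because `J² = -1`
  have e₁ : ((a ^ 2 + b ^ 2 : ℝ) : ℂ) * p.1 = 0 := by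
    push_cast; linear_combination (a : ℂ) * h₁ - b * I * h₂ + (b : ℂ) ^ 2 * p.1 * I_sq
  have e₂ : ((a ^ 2 + b ^ 2 : ℝ) : ℂ) * p.2 = 0 := by
    push_cast; linear_combination (a : ℂ) * h₂ - b * I * h₁ + (b : ℂ) ^ 2 * p.2 * I_sq
  have hab : a ^ 2 + b ^ 2 = 0 := by
    by_contra hne
    exact hp (Prod.ext ((mul_eq_zero.mp e₁).resolve_left (by exact_mod_cast hne))
      ((mul_eq_zero.mp e₂).resolve_left (by exact_mod_cast hne)))
  constructor <;> nlinarith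

lemma smul_add_smul_Jstr_ne_zero_iff {p : ℂ × ℂ} (hp : p ≠ 0) (a b : ℝ) :
    a • p + b • Jstr p ≠ 0 ↔ 0 < a * a + b * b := by
  have hli := LinearIndependent.pair_iff.mp (linearIndependent_Jstr hp) a b
  constructor
  · intro hne
    by_contra hle
    exact hne (by rw [(by nlinarith : a = 0), (by nlinarith : b = 0)]; simp)
  · intro hpos h
    obtain ⟨rfl, rfl⟩ := hli h
    simp at hpos

section ComplexLine

variable {L : Submodule ℝ (ℂ × ℂ)} (hJ : ∀ p ∈ L, Jstr p ∈ L)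
include hJ

lemma exists_smul_add_smul_Jstr_eq (hdim : Module.finrank ℝ L = 2) {p : ℂ × ℂ} (hp : p ∈ L)
    (hp0 : p ≠ 0) {q : ℂ × ℂ} (hq : q ∈ L) : ∃ a b : ℝ, a • p + b • Jstr p = q := by
  have hle : Submodule.span ℝ {p, Jstr p} ≤ L := by
    rw [Submodule.span_le, Set.insert_subset_iff, Set.singleton_subset_iff]
    exact ⟨hp, hJ p hp⟩
  have hspan : Submodule.span ℝ {p, Jstr p} = L := by
    refine Submodule.eq_of_le_of_finrank_le hle ?_
    rw [hdim, ← Matrix.range_cons_cons_empty, finrank_span_eq_card (linearIndependent_Jstr hp0)]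
    simp
  exact Submodule.mem_span_pair.mp (hspan ▸ hq)

lemma mForm_self_eq_pos_mul (hdim : Module.finrank ℝ L = 2) {p : ℂ × ℂ} (hp : p ∈ L)
    (hp0 : p ≠ 0) {q : ℂ × ℂ} (hq : q ∈ L) (hq0 : q ≠ 0) :
    ∃ c : ℝ, 0 < c ∧ mForm q q = c * mForm p p := by
  obtain ⟨a, b, rfl⟩ := exists_smul_add_smul_Jstr_eq hJ hdim hp hp0 hq
  exact ⟨a * a + b * b, (smul_add_smul_Jstr_ne_zero_iff hp0 a b).mp hq0,
    by rw [mForm_smul_add_smul_Jstr]⟩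

lemma mForm_eq_zero_of_mForm_self_eq_zero (hdim : Module.finrank ℝ L = 2) {p : ℂ × ℂ}
    (hp : p ∈ L) (hp0 : p ≠ 0) (h : mForm p p = 0) : ∀ q ∈ L, ∀ r ∈ L, mForm q r = 0 := by
  intro q hq r hr
  obtain ⟨a, b, rfl⟩ := exists_smul_add_smul_Jstr_eq hJ hdim hp hp0 hq
  obtain ⟨c, d, rfl⟩ := exists_smul_add_smul_Jstr_eq hJ hdim hp hp0 hr
  rw [mForm_smul_add_smul_Jstr, h, mul_zero]

lemma exists_zero_fst_mem_of_mForm_self_eq_zero {p : ℂ × ℂ} (hp : p ∈ L) (hp0 : p ≠ 0)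
    (h : mForm p p = 0) : ∃ w : ℂ, w ≠ 0 ∧ ((0 : ℂ), w) ∈ L := by
  suffices ∃ q ∈ L, q ≠ 0 ∧ q.1 = 0 by
    obtain ⟨q, hq, hq0, hq1⟩ := this
    exact ⟨q.2, fun h2 ↦ hq0 (Prod.ext hq1 h2), hq1 ▸ hq⟩
  by_cases hz : p.1 = 0
  · exact ⟨p, hp, hp0, hz⟩
  -- `m(p, p) = 0` makes `s = I w z̄` real, and then `s • p - |z|² • J p` has first coordinate
  -- `s z - z z̄ I w = 0`
  set s := (I * p.2 * conj p.1).re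
  have hs : I * p.2 * conj p.1 = s := by
    apply Complex.ext
    · rfl
    · have hre : (p.1 * conj p.2).re = 0 := by rw [mForm_self] at h; linarith
      simp only [mul_im, mul_re, I_re, I_im, conj_re, conj_im, ofReal_im] at hre ⊢
      linarith
  refine ⟨s • p + (-normSq p.1) • Jstr p,
    L.add_mem (L.smul_mem _ hp) (L.smul_mem _ (hJ p hp)), ?_, ?_⟩
  · refine (smul_add_smul_Jstr_ne_zero_iff hp0 _ _).mpr ?_
    have := normSq_pos.mpr hz
    nlinarith
  · simp only [Prod.fst_add, Prod.smul_fst, Jstr, real_smul, ofReal_neg, ← hs, ← mul_conj]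
    ring

end ComplexLine

theorem sign_of_m_on_complex_lines (L : Submodule ℝ (ℂ × ℂ))
    (hdim : Module.finrank ℝ L = 2) (hJ : ∀ p ∈ L, Jstr p ∈ L) :
    ((∀ p ∈ L, p ≠ 0 → 0 < mForm p p) ∨
     (∀ p ∈ L, p ≠ 0 → mForm p p < 0) ∨
     (∀ p ∈ L, ∀ q ∈ L, mForm p q = 0)) ∧
    ((∀ p ∈ L, ∀ q ∈ L, mForm p q = 0) ↔
      ∃ w : ℂ, w ≠ 0 ∧ ((0 : ℂ), w) ∈ L) := by
  obtain ⟨p, hp, hp0⟩ := Submodule.exists_mem_ne_zero_of_ne_bot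
    (Submodule.one_le_finrank_iff.mp (by omega) : L ≠ ⊥)
  refine ⟨?_, fun hzero ↦ exists_zero_fst_mem_of_mForm_self_eq_zero hJ hp hp0 (hzero p hp p hp),
    fun ⟨w, hw, hwL⟩ ↦ mForm_eq_zero_of_mForm_self_eq_zero hJ hdim hwL (by simpa using hw)
      (by simp [mForm])⟩
  rcases lt_trichotomy (mForm p p) 0 with hneg | hzero | hpos
  · refine Or.inr (Or.inl fun q hq hq0 ↦ ?_)
    obtain ⟨c, hc, hqp⟩ := mForm_self_eq_pos_mul hJ hdim hp hp0 hq hq0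
    exact hqp ▸ mul_neg_of_pos_of_neg hc hneg
  · exact Or.inr (Or.inr (mForm_eq_zero_of_mForm_self_eq_zero hJ hdim hp hp0 hzero))
  · refine Or.inl fun q hq hq0 ↦ ?_
    obtain ⟨c, hc, hqp⟩ := mForm_self_eq_pos_mul hJ hdim hp hp0 hq hq0
    exact hqp ▸ mul_pos hc hpos
end

section
/- Let X be a complete metric space and f : X → [1,∞) an upper semi-continuous function. Then for every x ∈ X there exists y ∈ X with f(y) ≥ f(x) and f(z) ≤ 2 f(y) for all z in the open ball of radius 1/√(f(y)) about y. -/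
theorem quasi_maximum_lemma {X : Type*} [MetricSpace X] [CompleteSpace X]
    (f : X → ℝ) (hf : UpperSemicontinuous f) (hf1 : ∀ x, 1 ≤ f x) (x : X) :
    ∃ y : X, f x ≤ f y ∧
      ∀ z ∈ Metric.ball y (1 / Real.sqrt (f y)), f z ≤ 2 * f y := by
  by_contra h
  push_neg at h
  have hstep : ∀ y : X, f x ≤ f y → ∃ z : X,
      dist z y < 1 / Real.sqrt (f y) ∧ 2 * f y < f z := by
    intro y hy
    obtain ⟨z, hz1, hz2⟩ := h y hy
    exact ⟨z, Metric.mem_ball.mp hz1, hz2⟩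
  classical
  let next : X → X := fun y => if h' : f x ≤ f y then (hstep y h').choose else y
  let u : ℕ → X := fun n => next^[n] x
  have husucc : ∀ n, u (n + 1) = next (u n) := fun n =>
    Function.iterate_succ_apply' next n x
  have key : ∀ n, f x ≤ f (u n) ∧ (2 : ℝ) ^ n ≤ f (u n) := by
    intro n
    induction n with
    | zero => exact ⟨le_refl _, by simpa [u] using hf1 x⟩
    | succ n ih =>
      obtain ⟨h1, h2⟩ := ih
      have hn : next (u n) = (hstep (u n) h1).choose := dif_pos h1
      have hp := (hstep (u n) h1).choose_spec
      rw [husucc n, hn]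
      refine ⟨?_, ?_⟩
      · have h1' : 1 ≤ f (u n) := hf1 (u n)
        nlinarith [hp.2]
      · have h21 : (2 : ℝ) ^ (n + 1) = 2 * 2 ^ n := by ring
        nlinarith [hp.2]
  have sqrt2_pos : (0 : ℝ) < Real.sqrt 2 := Real.sqrt_pos.mpr (by norm_num)
  have hsqrtpow : ∀ n : ℕ, Real.sqrt ((2 : ℝ) ^ n) = Real.sqrt 2 ^ n := by
    intro n
    rw [show ((2 : ℝ) ^ n) = (Real.sqrt 2 ^ n) ^ 2 by
      rw [← pow_mul, mul_comm, pow_mul, Real.sq_sqrt (by norm_num : (0:ℝ) ≤ 2)],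
      Real.sqrt_sq (by positivity)]
  have hdist : ∀ n, dist (u n) (u (n + 1)) ≤ 1 * ((Real.sqrt 2)⁻¹) ^ n := by
    intro n
    obtain ⟨h1, h2⟩ := key n
    have hn : next (u n) = (hstep (u n) h1).choose := dif_pos h1
    have hp := (hstep (u n) h1).choose_spec
    have hd : dist (u (n + 1)) (u n) < 1 / Real.sqrt (f (u n)) := by
      rw [husucc n, hn]; exact hp.1
    have hfn : (0 : ℝ) < f (u n) := lt_of_lt_of_le one_pos (hf1 (u n))
    have hsle : Real.sqrt ((2 : ℝ) ^ n) ≤ Real.sqrt (f (u n)) := Real.sqrt_le_sqrt h2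
    have hspos : (0 : ℝ) < Real.sqrt 2 ^ n := by positivity
    have hsfpos : (0 : ℝ) < Real.sqrt (f (u n)) := Real.sqrt_pos.mpr hfn
    rw [hsqrtpow n] at hsle
    have : 1 / Real.sqrt (f (u n)) ≤ 1 * ((Real.sqrt 2)⁻¹) ^ n := by
      rw [one_mul, inv_pow, ← one_div]
      exact one_div_le_one_div_of_le hspos hsle
    calc dist (u n) (u (n + 1)) = dist (u (n + 1)) (u n) := dist_comm _ _
      _ ≤ 1 / Real.sqrt (f (u n)) := le_of_lt hd
      _ ≤ 1 * ((Real.sqrt 2)⁻¹) ^ n := this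
  have hr1 : (Real.sqrt 2)⁻¹ < 1 := by
    rw [inv_lt_one_iff₀]
    right
    have : (1 : ℝ) < Real.sqrt 2 := by
      have := Real.lt_sqrt (x := 1) (y := 2) zero_le_one
      rw [this]; norm_num
    linarith
  have hcauchy : CauchySeq u := cauchySeq_of_le_geometric _ 1 hr1 hdist
  obtain ⟨p, hp⟩ := cauchySeq_tendsto_of_complete hcauchy
  have hev : ∀ᶠ z in nhds p, f z < f p + 1 := hf p (f p + 1) (by linarith)
  have hev1 : ∀ᶠ n in Filter.atTop, f (u n) < f p + 1 := hp.eventually hev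
  have hev2 : ∀ᶠ n in Filter.atTop, f p + 1 < (2 : ℝ) ^ n :=
    (tendsto_pow_atTop_atTop_of_one_lt (by norm_num : (1:ℝ) < 2)).eventually_gt_atTop _
  obtain ⟨n, h1, h2⟩ := (hev1.and hev2).exists
  have := (key n).2
  linarith
end
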